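/- arXiv:2005.00507 — 6 statements merged into one kernel-verified Lean document; each statement's English description precedes it below -/
import Mathlib

section
/- Let ℓ be a prime and let P be a finite ℓ-group. Suppose P has a normal subgroup H that is an elementary abelian ℓ-subgroup of rank at least ℓ+1 (i.e. |H| = ℓ^r with r ≥ ℓ+1). Then P has no maximal elementary abelian ℓ-subgroup of rank 2; that is, every elementary abelian ℓ-subgroup E of P with |E| = ℓ² is properly contained in some elementary abelian ℓ-subgroup of P. -/
/-- An elementary abelian `ℓ`-subgroup: a subgroup that is commutative and in which
every element `x` satisfies `x ^ ℓ = 1`. -/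
def IsElementaryAbelian (ℓ : ℕ) {G : Type*} [Group G] (E : Subgroup G) : Prop :=
  (∀ x ∈ E, ∀ y ∈ E, x * y = y * x) ∧ ∀ x ∈ E, x ^ ℓ = 1

/-- The conjugate subgroup `g E g⁻¹`. -/
def conjSubgroup {G : Type*} [Group G] (g : G) (E : Subgroup G) : Subgroup G :=
  E.map (MulAut.conj g).toMonoidHom

/-- A maximal elementary abelian `ℓ`-subgroup: one that is not properly contained in
any other elementary abelian `ℓ`-subgroup. -/
def IsMaximalElementaryAbelian (ℓ : ℕ) {G : Type*} [Group G] (E : Subgroup G) : Prop :=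
  IsElementaryAbelian ℓ E ∧
    ∀ E' : Subgroup G, IsElementaryAbelian ℓ E' → E ≤ E' → E' = E

/-!
If `E ≤ H`, then `H` itself is larger than `E`. Otherwise `H ⊓ E` is trivial or has order `ℓ`.
If it is trivial, a nontrivial element of `H` that is central in the `ℓ`-group `P` (it exists
since `H` is normal) extends `E`. If it has order `ℓ`, pick `a ∈ E \ H`. Conjugation by `a`
is an operator `f` on the `𝔽_ℓ`-vector space `H` with `(f - 1) ^ ℓ = 0`, hence
`|H| ≤ |ker (f - 1)| ^ ℓ`, and `r ≥ ℓ + 1` forces `|C_H(a)| > ℓ = |H ⊓ E|`.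
An element of `C_H(a)` outside `E` centralizes both `H ⊓ E` and `a`, hence all of `E`, since
`H ⊓ E` has prime index in `E`. In both cases the element found has order `ℓ` and commutes
with `E`, so together with `E` it generates a larger elementary abelian subgroup.
-/

open Subgroup

section LinearAlgebra

variable {M : Type*} [AddCommGroup M] [Finite M]

theorem Module.End.card_ker_pow_le {R : Type*} [Ring R] [Module R M] (g : Module.End R M)
    (k : ℕ) : Nat.card (LinearMap.ker (g ^ k)) ≤ Nat.card (LinearMap.ker g) ^ k := by
  induction k with
  | zero => simp
  | succ k ih =>
    let φ : LinearMap.ker (g ^ (k + 1)) →ₗ[R] LinearMap.ker (g ^ k) :=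
      g.restrict fun m hm => by rwa [LinearMap.mem_ker, ← Module.End.mul_apply, ← pow_succ]
    have hker : Nat.card (LinearMap.ker φ) ≤ Nat.card (LinearMap.ker g) :=
      Nat.card_le_card_of_injective (fun m => ⟨m.1.1, congrArg Subtype.val m.2⟩)
        fun m n h => Subtype.ext (Subtype.ext (congrArg Subtype.val h :))
    calc Nat.card (LinearMap.ker (g ^ (k + 1)))
        = Nat.card (LinearMap.ker φ) * Nat.card (LinearMap.range φ) := by
          rw [Submodule.card_eq_card_quotient_mul_card (LinearMap.ker φ),
            Nat.card_congr φ.quotKerEquivRange.toEquiv, mul_comm]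
      _ ≤ Nat.card (LinearMap.ker g) * Nat.card (LinearMap.ker (g ^ k)) :=
          Nat.mul_le_mul hker (Finite.card_subtype_le _)
      _ ≤ Nat.card (LinearMap.ker g) ^ (k + 1) := by
          rw [pow_succ']
          exact Nat.mul_le_mul_left _ ih

theorem Module.End.card_le_card_ker_sub_one_pow {p : ℕ} [Fact p.Prime] [Module (ZMod p) M]
    (f : Module.End (ZMod p) M) (hf : f ^ p = 1) :
    Nat.card M ≤ Nat.card (LinearMap.ker (f - 1)) ^ p := by
  -- `Module.End (ZMod p) M` has characteristic `p` only when `M` is nontrivial.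
  cases subsingleton_or_nontrivial M
  · rw [Nat.card_unique]
    exact Nat.one_le_pow _ _ Nat.card_pos
  have := charP_of_injective_algebraMap (algebraMap (ZMod p) (Module.End (ZMod p) M)).injective p
  have hnil : (f - 1) ^ p = 0 := by
    rw [sub_pow_char_of_commute _ (Commute.one_right f), hf, one_pow, sub_self]
  simpa [hnil] using (f - 1).card_ker_pow_le p

theorem MulAut.card_le_card_fixed_pow {A : Type*} [CommGroup A] [Finite A] {p : ℕ}
    [Fact p.Prime] (hA : ∀ x : A, x ^ p = 1) (φ : MulAut A) (hφ : φ ^ p = 1) :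
    Nat.card A ≤ Nat.card {x // φ x = x} ^ p := by
  have : Module (ZMod p) (Additive A) := AddCommGroup.zmodModule hA
  let f : Module.End (ZMod p) (Additive A) := φ.toMonoidHom.toAdditive.toZModLinearMap p
  have hfpow (n : ℕ) (x : Additive A) : (f ^ n) x = .ofMul ((φ ^ n) x.toMul) := by
    induction n generalizing x with
    | zero => rfl
    | succ n ih => rw [pow_succ, pow_succ, Module.End.mul_apply, MulAut.mul_apply, ih]; rfl
  have hf : f ^ p = 1 := LinearMap.ext fun x => by rw [hfpow, hφ]; rfl
  have hker : LinearMap.ker (f - 1) ≃ {x // φ x = x} :=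
    Equiv.subtypeEquiv Additive.toMul fun m => by
      rw [LinearMap.mem_ker, LinearMap.sub_apply, Module.End.one_apply, sub_eq_zero]
      exact Additive.toMul.injective.eq_iff.symm
  calc Nat.card A = Nat.card (Additive A) := rfl
    _ ≤ Nat.card (LinearMap.ker (f - 1)) ^ p := f.card_le_card_ker_sub_one_pow hf
    _ = Nat.card {x // φ x = x} ^ p := by rw [Nat.card_congr hker]

end LinearAlgebra

section Group

variable {G : Type*} [Group G]

theorem isElementaryAbelian_closure {ℓ : ℕ} {S : Set G}
    (hcomm : ∀ x ∈ S, ∀ y ∈ S, x * y = y * x) (hpow : ∀ x ∈ S, x ^ ℓ = 1) :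
    IsElementaryAbelian ℓ (closure S) := by
  have := isMulCommutative_closure hcomm
  refine ⟨fun x hx y hy => setLike_mul_comm hx hy, fun x hx => ?_⟩
  induction hx using closure_induction with
  | mem x hx => exact hpow x hx
  | one => exact one_pow ℓ
  | mul x y hx hy ihx ihy => rw [Commute.mul_pow (setLike_mul_comm hx hy), ihx, ihy, one_mul]
  | inv x _ ih => rw [inv_pow, ih, inv_one]

theorem IsElementaryAbelian.exists_lt_of_commute {ℓ : ℕ} {E : Subgroup G}
    (hE : IsElementaryAbelian ℓ E) {x : G} (hxE : x ∉ E) (hx : x ^ ℓ = 1)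
    (hxcomm : ∀ e ∈ E, x * e = e * x) :
    ∃ E' : Subgroup G, IsElementaryAbelian ℓ E' ∧ E < E' := by
  refine ⟨closure (insert x E), isElementaryAbelian_closure ?_ ?_, ?_⟩
  · rintro y (rfl | hy) z (rfl | hz)
    · rfl
    · exact hxcomm z hz
    · exact (hxcomm y hy).symm
    · exact hE.1 y hy z hz
  · rintro y (rfl | hy)
    exacts [hx, hE.2 y hy]
  · exact SetLike.lt_iff_le_and_exists.mpr
      ⟨fun e he => subset_closure (Set.mem_insert_of_mem _ he),
        x, subset_closure (Set.mem_insert _ _), hxE⟩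

theorem IsPGroup.exists_ne_one_mem_center_of_normal {p : ℕ} [Fact p.Prime] (hG : IsPGroup p G)
    {H : Subgroup G} [H.Normal] [Finite H] (hH : p ∣ Nat.card H) :
    ∃ x ∈ H, x ≠ 1 ∧ x ∈ center G := by
  obtain ⟨x, hx, hx1⟩ :=
    (hG.of_equiv ConjAct.toConjAct).exists_fixed_point_of_prime_dvd_card_of_fixed_point H hH
      (a := 1) fun g => smul_one g
  refine ⟨x, x.2, fun h => hx1 (Subtype.ext h.symm), mem_center_iff.mpr fun g => ?_⟩
  have hgx := congrArg Subtype.val (hx (ConjAct.toConjAct g))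
  rw [ConjAct.Subgroup.val_conj_smul, ConjAct.toConjAct_smul] at hgx
  exact (eq_mul_inv_iff_mul_eq.mp hgx.symm).symm

theorem Subgroup.eq_bot_or_card_eq_of_lt_of_card_eq_sq {p : ℕ} (hp : p.Prime) {K E : Subgroup G}
    (hKE : K < E) (hE : Nat.card E = p ^ 2) :
    K = ⊥ ∨ K.relIndex E = p ∧ Nat.card K = p := by
  have htower : Nat.card K * K.relIndex E = p ^ 2 := by
    rw [← relIndex_bot_left, relIndex_mul_relIndex _ _ _ bot_le hKE.le, relIndex_bot_left, hE]
  obtain ⟨i, hi, hindex⟩ := (Nat.dvd_prime_pow hp).mp (Dvd.intro_left _ htower)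
  interval_cases i
  · exact absurd (relIndex_eq_one.mp hindex) hKE.not_ge
  · rw [pow_one] at hindex
    rw [hindex, sq] at htower
    exact Or.inr ⟨hindex, Nat.eq_of_mul_eq_mul_right hp.pos htower⟩
  · rw [hindex, mul_eq_right₀ (pow_ne_zero 2 hp.ne_zero), card_eq_one] at htower
    exact Or.inl htower

theorem Subgroup.le_of_relIndex_prime {K M E : Subgroup G} (hKE : K ≤ E)
    (hp : (K.relIndex E).Prime) (hKM : K ≤ M) {a : G} (haE : a ∈ E) (haM : a ∈ M)
    (haK : a ∉ K) : E ≤ M := by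
  have htower := relIndex_mul_relIndex K (M ⊓ E) E (le_inf hKM hKE) inf_le_right
  have hne : K.relIndex (M ⊓ E) ≠ 1 := fun h => haK (relIndex_eq_one.mp h ⟨haM, haE⟩)
  rw [← htower] at hp
  have hEM := relIndex_eq_one.mp ((Nat.prime_mul_iff.mp hp).resolve_right fun h => hne h.2).2
  exact hEM.trans inf_le_left

theorem IsElementaryAbelian.card_le_card_inf_centralizer_pow {p : ℕ} [Fact p.Prime]
    {H : Subgroup G} [H.Normal] [Finite H] (hH : IsElementaryAbelian p H) {a : G}
    (ha : a ^ p = 1) : Nat.card H ≤ Nat.card (H ⊓ centralizer {a} : Subgroup G) ^ p := by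
  let _ : CommGroup H := { mul_comm := fun x y => Subtype.ext (hH.1 _ x.2 _ y.2) }
  have : Finite (H ⊓ centralizer {a} : Subgroup G) :=
    Finite.of_injective _ (inclusion_injective (inf_le_left (b := centralizer {a})))
  have hφ : MulAut.conjNormal (H := H) a ^ p = 1 := by rw [← map_pow, ha, map_one]
  have hmem (x : {x : H // MulAut.conjNormal a x = x}) : (x : G) ∈ centralizer {a} := by
    have hx := congrArg Subtype.val x.2
    rw [MulAut.conjNormal_apply] at hx
    exact mem_centralizer_singleton_iff.mpr (mul_inv_eq_iff_eq_mul.mp hx).symm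
  refine (MulAut.card_le_card_fixed_pow (fun x => Subtype.ext (hH.2 _ x.2)) _ hφ).trans
    (Nat.pow_le_pow_left (Nat.card_le_card_of_injective
      (f := fun x => (⟨x.1, x.1.2, hmem x⟩ : (H ⊓ centralizer {a} : Subgroup G)))
      fun x y h => Subtype.ext (Subtype.ext (congrArg Subtype.val h :))) p)

theorem IsElementaryAbelian.exists_commute_not_mem_of_relIndex_prime [Finite G] {p r : ℕ}
    [hp : Fact p.Prime] {H E : Subgroup G} [H.Normal] (hH : IsElementaryAbelian p H)
    (hHcard : Nat.card H = p ^ r) (hr : p + 1 ≤ r) (hindex : ((H ⊓ E).relIndex E).Prime)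
    (hcard : Nat.card (H ⊓ E : Subgroup G) ≤ p) {a : G} (haE : a ∈ E) (haH : a ∉ H)
    (ha : a ^ p = 1) : ∃ x ∈ H, x ∉ E ∧ ∀ e ∈ E, x * e = e * x := by
  have hlarge : p < Nat.card (H ⊓ centralizer {a} : Subgroup G) := by
    by_contra! h
    have := (hH.card_le_card_inf_centralizer_pow ha).trans (Nat.pow_le_pow_left h p)
    rw [hHcard, Nat.pow_le_pow_iff_right hp.out.one_lt] at this
    omega
  obtain ⟨x, ⟨hxH, hxa⟩, hxE⟩ : ∃ x ∈ H ⊓ centralizer {a}, x ∉ E := by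
    by_contra! h
    have := card_le_of_le
      (show H ⊓ centralizer {a} ≤ H ⊓ E from fun x hx => ⟨hx.1, h x hx⟩)
    omega
  have hEx : E ≤ centralizer {x} :=
    le_of_relIndex_prime inf_le_right hindex
      (fun y hy => mem_centralizer_singleton_iff.mpr (hH.1 y hy.1 x hxH)) haE
      (mem_centralizer_singleton_iff.mpr (mem_centralizer_singleton_iff.mp hxa).symm)
      fun h => haH h.1
  exact ⟨x, hxH, hxE, fun e he => (mem_centralizer_singleton_iff.mp (hEx he)).symm⟩

end Group

/-- If a finite `ℓ`-group `P` has a normal elementary abelian subgroup of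
rank at least `ℓ + 1`, then `P` has no maximal elementary abelian `ℓ`-subgroup of rank 2. -/
theorem no_maximal_rank_two_of_normal_large_elemAb
    (ℓ : ℕ) (hℓ : ℓ.Prime) (P : Type*) [Group P] [Finite P] (hP : IsPGroup ℓ P)
    (H : Subgroup P) (hHnormal : H.Normal) (hHea : IsElementaryAbelian ℓ H)
    (r : ℕ) (hr : ℓ + 1 ≤ r) (hHcard : Nat.card H = ℓ ^ r) :
    ∀ E : Subgroup P, IsElementaryAbelian ℓ E → Nat.card E = ℓ ^ 2 →
      ∃ E' : Subgroup P, IsElementaryAbelian ℓ E' ∧ E < E' := by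
  intro E hE hEcard
  have := Fact.mk hℓ
  by_cases hEH : E ≤ H
  · refine ⟨H, hHea, hEH.lt_of_ne ?_⟩
    rintro rfl
    have := Nat.pow_right_injective hℓ.two_le (hEcard.symm.trans hHcard)
    have := hℓ.two_le
    omega
  obtain ⟨a, haE, haH⟩ := SetLike.not_le_iff_exists.mp hEH
  suffices ∃ x ∈ H, x ∉ E ∧ ∀ e ∈ E, x * e = e * x by
    obtain ⟨x, hxH, hxE, hx⟩ := this
    exact hE.exists_lt_of_commute hxE (hHea.2 x hxH) hx
  rcases (H ⊓ E).eq_bot_or_card_eq_of_lt_of_card_eq_sq hℓ (inf_lt_right.mpr hEH) hEcard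
    with hbot | ⟨hindex, hcard⟩
  · obtain ⟨x, hxH, hx1, hxZ⟩ := hP.exists_ne_one_mem_center_of_normal (H := H)
      (hHcard ▸ dvd_pow_self ℓ (by omega))
    refine ⟨x, hxH, fun hxE => hx1 ?_, fun e _ => (mem_center_iff.mp hxZ e).symm⟩
    have hx : x ∈ H ⊓ E := ⟨hxH, hxE⟩
    rwa [hbot, mem_bot] at hx
  · exact hHea.exists_commute_not_mem_of_relIndex_prime hHcard hr (hindex ▸ hℓ) hcard.le
      haE haH (hE.2 a haE)
end

section
/- Let ℓ be a prime and let P be a finite ℓ-group of ℓ-rank 2 (P contains an elementary abelian ℓ-subgroup of order ℓ² but none of order ℓ³) whose center Z(P) is not cyclic. Then P has exactly one maximal elementary abelian ℓ-subgroup of rank 2; that is, there is a unique elementary abelian ℓ-subgroup E of P with |E| = ℓ² that is maximal among elementary abelian ℓ-subgroups of P. -/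
open Finset Subgroup

section CyclicOfFewRoots

variable {G : Type*} [CommGroup G] [Fintype G] [DecidableEq G]

lemma card_filter_pow_mul_eq_one_le (m n : ℕ) :
    #{a : G | a ^ (m * n) = 1} ≤ #{a : G | a ^ m = 1} * #{a : G | a ^ n = 1} := by
  refine (card_le_mul_card_image (f := (· ^ m)) _ _ fun b hb => ?_).trans
    (Nat.mul_le_mul_left _ (card_le_card fun b hb => ?_))
  · -- the fibre of `a ↦ a ^ m` through `a₀` is the coset `a₀ * {a | a ^ m = 1}`
    obtain ⟨a₀, -, rfl⟩ := mem_image.mp hb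
    refine card_le_card_of_injOn (· * a₀⁻¹) (fun a ha => ?_) fun a _ b _ h => mul_right_cancel h
    simp only [coe_filter, mem_filter, mem_univ, true_and, Set.mem_ofPred_eq] at ha ⊢
    rw [mul_pow, ha.2, inv_pow, mul_inv_cancel]
  · obtain ⟨a, ha, rfl⟩ := mem_image.mp hb
    simp only [mem_filter, mem_univ, true_and] at ha ⊢
    rwa [← pow_mul]

lemma card_filter_pow_pow_eq_one_le (ℓ k : ℕ) :
    #{a : G | a ^ ℓ ^ k = 1} ≤ #{a : G | a ^ ℓ = 1} ^ k := by
  induction k with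
  | zero => simpa using card_le_one.2 (by simp)
  | succ k ih =>
    rw [pow_succ', pow_succ']
    exact (card_filter_pow_mul_eq_one_le _ _).trans (Nat.mul_le_mul_left _ ih)

lemma isCyclic_of_card_filter_pow_prime_eq_one_le {ℓ : ℕ} (hℓ : ℓ.Prime) (hG : IsPGroup ℓ G)
    (h : #{a : G | a ^ ℓ = 1} ≤ ℓ) : IsCyclic G := by
  have : Fact ℓ.Prime := ⟨hℓ⟩
  refine isCyclic_of_card_pow_eq_one_le fun n hn => ?_
  have hfilter : #{a : G | a ^ n = 1} = #{a : G | a ^ ℓ ^ n.factorization ℓ = 1} :=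
    congrArg card <| filter_congr fun a _ => by
      obtain ⟨m, hm⟩ := IsPGroup.iff_orderOf.mp hG a
      rw [← orderOf_dvd_iff_pow_eq_one, ← orderOf_dvd_iff_pow_eq_one, hm,
        Nat.pow_dvd_pow_iff_le_right hℓ.one_lt, ← hℓ.pow_dvd_iff_le_factorization hn.ne']
  rw [hfilter]
  calc #{a : G | a ^ ℓ ^ n.factorization ℓ = 1}
      ≤ #{a : G | a ^ ℓ = 1} ^ n.factorization ℓ := card_filter_pow_pow_eq_one_le _ _
    _ ≤ ℓ ^ n.factorization ℓ := Nat.pow_le_pow_left h _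
    _ ≤ n := Nat.ordProj_le ℓ hn.ne'

end CyclicOfFewRoots

lemma IsPGroup.card_eq_pow_succ_of_lt_of_le {ℓ n : ℕ} (hℓ : ℓ.Prime) {H : Type*} [Group H]
    [Finite H] (hH : IsPGroup ℓ H) (hlt : ℓ ^ n < Nat.card H) (hle : Nat.card H ≤ ℓ ^ (n + 1)) :
    Nat.card H = ℓ ^ (n + 1) := by
  have := Fact.mk hℓ
  obtain ⟨k, hk⟩ := hH.exists_card_eq
  rw [hk, Nat.pow_lt_pow_iff_right hℓ.one_lt] at hlt
  rw [hk, Nat.pow_le_pow_iff_right hℓ.one_lt] at hle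
  rw [hk, le_antisymm hle hlt]

namespace IsElementaryAbelian

variable {ℓ : ℕ} {G : Type*} [Group G] {E F : Subgroup G}

lemma mono (hF : IsElementaryAbelian ℓ F) (hEF : E ≤ F) : IsElementaryAbelian ℓ E :=
  ⟨fun x hx y hy => hF.1 x (hEF hx) y (hEF hy), fun x hx => hF.2 x (hEF hx)⟩

lemma isPGroup (hE : IsElementaryAbelian ℓ E) : IsPGroup ℓ E :=
  fun x => ⟨1, Subtype.ext <| by simpa using hE.2 x x.2⟩

lemma sup_of_le_center (hE : IsElementaryAbelian ℓ E) (hF : IsElementaryAbelian ℓ F)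
    (hFZ : F ≤ center G) : IsElementaryAbelian ℓ (E ⊔ F) := by
  have hcomm : ∀ z ∈ F, ∀ y : G, Commute y z := fun z hz y => mem_center_iff.mp (hFZ hz) y
  have : F.Normal := ⟨fun z hz g => by rwa [(hcomm z hz g).eq, mul_inv_cancel_right]⟩
  constructor
  · intro x hx y hy
    obtain ⟨a, ha, b, hb, rfl⟩ := mem_sup_of_normal_right.mp hx
    obtain ⟨c, hc, d, hd, rfl⟩ := mem_sup_of_normal_right.mp hy
    exact ((Commute.mul_left (hE.1 a ha c hc) (hcomm b hb c).symm).mul_right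
      ((hcomm d hd a).mul_left (hF.1 b hb d hd)))
  · intro x hx
    obtain ⟨a, ha, b, hb, rfl⟩ := mem_sup_of_normal_right.mp hx
    rw [(hcomm b hb a).mul_pow, hE.2 a ha, hF.2 b hb, one_mul]

lemma card_le_of_not_exists_card_eq_pow_succ [Finite G] (hℓ : ℓ.Prime) {n : ℕ}
    (hrk : ¬ ∃ F : Subgroup G, IsElementaryAbelian ℓ F ∧ Nat.card F = ℓ ^ (n + 1))
    (hE : IsElementaryAbelian ℓ E) : Nat.card E ≤ ℓ ^ n := by
  have := Fact.mk hℓ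
  by_contra! hlt
  obtain ⟨k, hk⟩ := hE.isPGroup.exists_card_eq
  have hle : ℓ ^ (n + 1) ≤ Nat.card E := by
    rw [hk] at hlt ⊢
    exact Nat.pow_le_pow_right hℓ.pos ((Nat.pow_lt_pow_iff_right hℓ.one_lt).mp hlt)
  obtain ⟨H, hH⟩ := Sylow.exists_subgroup_card_pow_prime_of_le_card hℓ hE.isPGroup hle
  exact hrk ⟨H.map E.subtype, hE.mono (map_subtype_le H),
    by rw [card_map_of_injective E.subtype_injective, hH]⟩

lemma isMaximalElementaryAbelian_of_forall_card_le [Finite G] (hE : IsElementaryAbelian ℓ E)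
    (h : ∀ F : Subgroup G, IsElementaryAbelian ℓ F → Nat.card F ≤ Nat.card E) :
    IsMaximalElementaryAbelian ℓ E :=
  ⟨hE, fun F hF hEF => (eq_of_le_of_card_ge hEF (h F hF)).symm⟩

end IsElementaryAbelian

lemma IsMaximalElementaryAbelian.le_of_le_center {ℓ : ℕ} {G : Type*} [Group G]
    {E F : Subgroup G} (hE : IsMaximalElementaryAbelian ℓ E) (hF : IsElementaryAbelian ℓ F)
    (hFZ : F ≤ center G) : F ≤ E :=
  le_sup_right.trans (hE.2 _ (hE.1.sup_of_le_center hF hFZ) le_sup_left).le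

section CenterOmegaOne

open IsMulCommutative in
/-- The subgroup `Ω₁(Z(G))`. -/
def centerOmegaOne (ℓ : ℕ) (G : Type*) [Group G] : Subgroup G :=
  (powMonoidHom ℓ : center G →* center G).ker.map (center G).subtype

variable {ℓ : ℕ} {G : Type*} [Group G]

lemma mem_centerOmegaOne {x : G} : x ∈ centerOmegaOne ℓ G ↔ x ∈ center G ∧ x ^ ℓ = 1 := by
  simp [centerOmegaOne, and_comm]

lemma centerOmegaOne_le_center : centerOmegaOne ℓ G ≤ center G :=
  map_subtype_le _

lemma isElementaryAbelian_centerOmegaOne : IsElementaryAbelian ℓ (centerOmegaOne ℓ G) :=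
  ⟨fun x _ _ hy => mem_center_iff.mp (centerOmegaOne_le_center hy) x,
    fun _ hx => (mem_centerOmegaOne.mp hx).2⟩

open IsMulCommutative in
lemma lt_card_centerOmegaOne_of_not_isCyclic [Finite G] (hℓ : ℓ.Prime) (hG : IsPGroup ℓ G)
    (hZ : ¬ IsCyclic (center G)) : ℓ < Nat.card (centerOmegaOne ℓ G) := by
  classical
  have := Fintype.ofFinite G
  contrapose! hZ
  refine isCyclic_of_card_filter_pow_prime_eq_one_le hℓ (hG.to_subgroup _) ?_
  rw [centerOmegaOne, card_map_of_injective (subtype_injective _), Nat.card_eq_fintype_card,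
    Fintype.card_subtype] at hZ
  simpa only [MonoidHom.mem_ker, powMonoidHom_apply] using hZ

end CenterOmegaOne

theorem unique_maximal_rank_two_of_rank_two_noncyclic_center_general
    (ℓ : ℕ) (hℓ : ℓ.Prime) (P : Type*) [Group P] [Finite P] (hP : IsPGroup ℓ P)
    (hrk3 : ¬ ∃ E : Subgroup P, IsElementaryAbelian ℓ E ∧ Nat.card E = ℓ ^ 3)
    (hZ : ¬ IsCyclic (Subgroup.center P)) :
    ∃! E : Subgroup P, Nat.card E = ℓ ^ 2 ∧ IsMaximalElementaryAbelian ℓ E := by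
  have hle : ∀ E : Subgroup P, IsElementaryAbelian ℓ E → Nat.card E ≤ ℓ ^ 2 :=
    fun E hE => hE.card_le_of_not_exists_card_eq_pow_succ hℓ hrk3
  have hΩ : Nat.card (centerOmegaOne ℓ P) = ℓ ^ 2 := by
    refine (hP.to_subgroup _).card_eq_pow_succ_of_lt_of_le hℓ (n := 1) ?_
      (hle _ isElementaryAbelian_centerOmegaOne)
    simpa using lt_card_centerOmegaOne_of_not_isCyclic hℓ hP hZ
  have hΩmax : IsMaximalElementaryAbelian ℓ (centerOmegaOne ℓ P) :=
    isElementaryAbelian_centerOmegaOne.isMaximalElementaryAbelian_of_forall_card_le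
      fun F hF => hΩ ▸ hle F hF
  refine ⟨centerOmegaOne ℓ P, ⟨hΩ, hΩmax⟩, ?_⟩
  rintro E ⟨hE, hEmax⟩
  exact (eq_of_le_of_card_ge (hEmax.le_of_le_center isElementaryAbelian_centerOmegaOne
    centerOmegaOne_le_center) (by rw [hE, hΩ])).symm

/-- A finite `ℓ`-group of `ℓ`-rank 2 with noncyclic center has exactly one
maximal elementary abelian `ℓ`-subgroup of rank 2. -/
theorem unique_maximal_rank_two_of_rank_two_noncyclic_center
    (ℓ : ℕ) (hℓ : ℓ.Prime) (P : Type*) [Group P] [Finite P] (hP : IsPGroup ℓ P)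
    (hrk2 : ∃ E : Subgroup P, IsElementaryAbelian ℓ E ∧ Nat.card E = ℓ ^ 2)
    (hrk3 : ¬ ∃ E : Subgroup P, IsElementaryAbelian ℓ E ∧ Nat.card E = ℓ ^ 3)
    (hZ : ¬ IsCyclic (Subgroup.center P)) :
    ∃! E : Subgroup P, Nat.card E = ℓ ^ 2 ∧ IsMaximalElementaryAbelian ℓ E :=
  unique_maximal_rank_two_of_rank_two_noncyclic_center_general ℓ hℓ P hP hrk3 hZ
end

section
/- Let ℓ be a prime and let P be a finite ℓ-group of ℓ-rank at least 3 (P contains an elementary abelian ℓ-subgroup of order ℓ³) whose center Z(P) is not cyclic. Then P has no maximal elementary abelian ℓ-subgroup of rank 2; that is, every elementary abelian ℓ-subgroup E of P with |E| = ℓ² is properly contained in some elementary abelian ℓ-subgroup of P. -/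
/-!
Let `Ω = Ω₁(Z(P))` be the subgroup of central elements of order dividing `ℓ`. It is
elementary abelian and, since `Z(P)` is not cyclic, of order at least `ℓ²`. Joining a central
elementary abelian subgroup to an elementary abelian one keeps it elementary abelian. So given
`E` of order `ℓ²`: if `Ω ⊈ E`, then `E < E ⊔ Ω`; otherwise `E = Ω` is central, and `E < F ⊔ E`
for any elementary abelian `F` of order `ℓ³`.
-/

open Subgroup
open scoped IsMulCommutative

theorem card_ker_powMonoidHom_pow_le {G : Type*} [CommGroup G] [Finite G] (n k : ℕ) :
    Nat.card (powMonoidHom (n ^ k) : G →* G).ker ≤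
      Nat.card (powMonoidHom n : G →* G).ker ^ k := by
  induction k with
  | zero => simp
  | succ k ih =>
    set K := (powMonoidHom (n ^ (k + 1)) : G →* G).ker
    set f := (powMonoidHom n : G →* G).domRestrict K
    have hker : Nat.card f.ker ≤ Nat.card (powMonoidHom n : G →* G).ker :=
      Nat.card_le_card_of_injective (fun x => ⟨x.1.1, x.2⟩)
        fun x y h => Subtype.ext (Subtype.ext (Subtype.mk.inj h))
    have hrange : f.range ≤ (powMonoidHom (n ^ k)).ker := by
      rintro _ ⟨x, rfl⟩
      have hx : (x : G) ^ n ^ (k + 1) = 1 := x.2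
      rw [MonoidHom.mem_ker, MonoidHom.domRestrict_apply, powMonoidHom_apply, powMonoidHom_apply,
        ← pow_mul, ← pow_succ', hx]
    calc Nat.card K = Nat.card f.ker * Nat.card f.range := by
          rw [← f.ker.card_mul_index, Subgroup.index_ker]
      _ ≤ Nat.card (powMonoidHom n : G →* G).ker * Nat.card (powMonoidHom n : G →* G).ker ^ k :=
          Nat.mul_le_mul hker ((Subgroup.card_le_of_le hrange).trans ih)
      _ = _ := (pow_succ' _ _).symm

/-- An element of maximal order has order `exponent G = p ^ m`, while
`|G| = |ker (· ^ p ^ m)| ≤ |ker (· ^ p)| ^ m ≤ p ^ m`. -/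
theorem isCyclic_of_card_ker_powMonoidHom_le {G : Type*} [CommGroup G] [Finite G] {p : ℕ}
    [Fact p.Prime] (hG : IsPGroup p G) (h : Nat.card (powMonoidHom p : G →* G).ker ≤ p) :
    IsCyclic G := by
  obtain ⟨g, hg⟩ := Monoid.exists_orderOf_eq_exponent (Monoid.ExponentExists.of_finite (G := G))
  obtain ⟨m, hm⟩ := hG.exists_exponent_eq_pow
  have hker : (powMonoidHom (p ^ m) : G →* G).ker = ⊤ := by
    ext x
    simp [← hm, Monoid.pow_exponent_eq_one]
  refine isCyclic_of_orderOf_eq_card g (le_antisymm orderOf_le_card ?_)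
  calc Nat.card G = Nat.card (powMonoidHom (p ^ m) : G →* G).ker := by
        rw [hker, Subgroup.card_top]
    _ ≤ Nat.card (powMonoidHom p : G →* G).ker ^ m := card_ker_powMonoidHom_pow_le p m
    _ ≤ p ^ m := Nat.pow_le_pow_left h m
    _ = orderOf g := by rw [hg, hm]

/-- `Ω₁(Z(G))`. -/
def omegaOneCenter (ℓ : ℕ) (G : Type*) [Group G] : Subgroup G :=
  (powMonoidHom ℓ : center G →* center G).ker.map (center G).subtype

section

variable {ℓ : ℕ} {G : Type*} [Group G]

theorem Subgroup.normal_of_le_center {C : Subgroup G} (h : C ≤ center G) : C.Normal :=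
  ⟨fun n hn g => by rwa [mem_center_iff.mp (h hn) g, mul_inv_cancel_right]⟩

theorem IsElementaryAbelian.sup_of_le_center_s2 {F C : Subgroup G}
    (hF : IsElementaryAbelian ℓ F) (hC : C ≤ center G) (hCℓ : ∀ c ∈ C, c ^ ℓ = 1) :
    IsElementaryAbelian ℓ (F ⊔ C) := by
  have := normal_of_le_center hC
  have central : ∀ c ∈ C, ∀ g : G, Commute g c := fun c hc g => mem_center_iff.mp (hC hc) g
  constructor
  · intro x hx y hy
    obtain ⟨f₁, hf₁, c₁, hc₁, rfl⟩ := mem_sup_of_normal_right.mp hx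
    obtain ⟨f₂, hf₂, c₂, hc₂, rfl⟩ := mem_sup_of_normal_right.mp hy
    have hf : Commute f₁ f₂ := hF.1 f₁ hf₁ f₂ hf₂
    exact (hf.mul_right (central c₂ hc₂ f₁)).mul_left (central c₁ hc₁ _).symm
  · intro x hx
    obtain ⟨f, hf, c, hc, rfl⟩ := mem_sup_of_normal_right.mp hx
    rw [(central c hc f).mul_pow, hF.2 f hf, hCℓ c hc, one_mul]

theorem omegaOneCenter_le_center : omegaOneCenter ℓ G ≤ center G :=
  map_subtype_le _

theorem pow_eq_one_of_mem_omegaOneCenter {z : G} (hz : z ∈ omegaOneCenter ℓ G) : z ^ ℓ = 1 := by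
  obtain ⟨z, hz, rfl⟩ := hz
  exact congrArg Subtype.val hz

theorem lt_card_omegaOneCenter [Finite G] [Fact ℓ.Prime] (hG : IsPGroup ℓ G)
    (hZ : ¬ IsCyclic (center G)) : ℓ < Nat.card (omegaOneCenter ℓ G) := by
  rw [omegaOneCenter, card_map_of_injective (center G).subtype_injective]
  by_contra! h
  exact hZ (isCyclic_of_card_ker_powMonoidHom_le (hG.to_subgroup _) h)

end

/-- A finite `ℓ`-group of `ℓ`-rank at least 3 with noncyclic center has no
maximal elementary abelian `ℓ`-subgroup of rank 2. -/
theorem no_maximal_rank_two_of_rank_three_noncyclic_center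
    (ℓ : ℕ) (hℓ : ℓ.Prime) (P : Type*) [Group P] [Finite P] (hP : IsPGroup ℓ P)
    (hrk3 : ∃ E : Subgroup P, IsElementaryAbelian ℓ E ∧ Nat.card E = ℓ ^ 3)
    (hZ : ¬ IsCyclic (Subgroup.center P)) :
    ∀ E : Subgroup P, IsElementaryAbelian ℓ E → Nat.card E = ℓ ^ 2 →
      ∃ E' : Subgroup P, IsElementaryAbelian ℓ E' ∧ E < E' := by
  intro E hE hcard
  have := Fact.mk hℓ
  by_cases hΩE : omegaOneCenter ℓ P ≤ E
  · obtain ⟨k, hk, hΩcard⟩ := (Nat.dvd_prime_pow hℓ).mp (hcard ▸ card_dvd_of_le hΩE)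
    have hk2 : k = 2 := by
      have hlt : ℓ ^ 1 < ℓ ^ k := by
        rw [pow_one, ← hΩcard]
        exact lt_card_omegaOneCenter hP hZ
      have := (Nat.pow_lt_pow_iff_right hℓ.one_lt).mp hlt
      omega
    have hEΩ : omegaOneCenter ℓ P = E := eq_of_le_of_card_ge hΩE (by rw [hcard, hΩcard, hk2])
    obtain ⟨F, hF, hFcard⟩ := hrk3
    refine ⟨F ⊔ E, hF.sup_of_le_center_s2 (hEΩ ▸ omegaOneCenter_le_center) hE.2,
      right_lt_sup.mpr fun hFE => ?_⟩
    have := card_le_of_le hFE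
    rw [hcard, hFcard, Nat.pow_le_pow_iff_right hℓ.one_lt] at this
    omega
  · exact ⟨E ⊔ omegaOneCenter ℓ P, hE.sup_of_le_center_s2 omegaOneCenter_le_center
      fun _ => pow_eq_one_of_mem_omegaOneCenter, left_lt_sup.mpr hΩE⟩
end

section
/- Let ℓ be a prime and let f : H → G be a homomorphism of finite groups whose kernel Z is contained in the center of H and has order coprime to ℓ, and whose range is a normal subgroup of G of index coprime to ℓ. Then: (i) for every noncyclic elementary abelian ℓ-subgroup A of G there exist a noncyclic elementary abelian ℓ-subgroup E of H and an element g ∈ G such that g A g⁻¹ = f(E); and (ii) if moreover f is surjective, then the assignment E ↦ f(E) induces a bijection between the H-conjugacy classes of noncyclic elementary abelian ℓ-subgroups of H and the G-conjugacy classes of noncyclic elementary abelian ℓ-subgroups of G. -/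
/-- The type of noncyclic elementary abelian `ℓ`-subgroups of `G`
(elementary abelian of order at least `ℓ²`). -/
def NoncyclicElemAb (ℓ : ℕ) (G : Type*) [Group G] : Type _ :=
  {E : Subgroup G // IsElementaryAbelian ℓ E ∧ ℓ ^ 2 ≤ Nat.card E}

/-- The conjugacy relation on noncyclic elementary abelian `ℓ`-subgroups. -/
def conjRel (ℓ : ℕ) (G : Type*) [Group G] :
    NoncyclicElemAb ℓ G → NoncyclicElemAb ℓ G → Prop :=
  fun E E' => ∃ g : G, conjSubgroup g E.1 = E'.1


/-!
Elementary abelian `ℓ`-subgroups are `ℓ`-groups, and `f` is injective on every `ℓ`-subgroup of `H`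
because `ker f` is an `ℓ'`-group; so it suffices to lift `ℓ`-subgroups along `f` up to conjugacy.
If `Q` is a Sylow `ℓ`-subgroup of `H`, then `f Q` has index `[H : Q ⊔ ker f] * [G : f H]`, prime
to `ℓ`, so it is a Sylow subgroup of `G` and contains a conjugate `g A g⁻¹`, which is then the
image of `Q ⊓ f⁻¹(g A g⁻¹)`. If `f X = f Y` for `ℓ`-subgroups `X`, `Y`, both are Sylow subgroups
of `K = f⁻¹(f Y)`: an `ℓ`-subgroup of `K` containing `X` maps injectively into `f X`, so it is `X`.
Sylow's conjugacy theorem in `K` then conjugates `X` to `Y`.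
-/

section Subgroup

variable {H G : Type*} [Group H] [Group G]

lemma Subgroup.map_inf_comap (f : H →* G) (X : Subgroup H) (Y : Subgroup G) :
    (X ⊓ Y.comap f).map f = X.map f ⊓ Y :=
  SetLike.coe_injective (Set.image_inter_preimage f X Y)

lemma Subgroup.subgroupOf_map_subtype_of_le {Z K : Subgroup H} (h : Z ≤ K) :
    (Z.subgroupOf K).map K.subtype = Z := by
  rw [Subgroup.subgroupOf_map_subtype, inf_of_le_left h]

lemma Subgroup.le_of_map_le_of_injOn {f : H →* G} {W Z : Subgroup H} (hinj : Set.InjOn f W)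
    (hZW : Z ≤ W) (h : W.map f ≤ Z.map f) : W ≤ Z := by
  intro x hx
  obtain ⟨z, hz, hzx⟩ := h (Subgroup.mem_map_of_mem f hx)
  rwa [← hinj (hZW hz) hx hzx]

end Subgroup

section ConjSubgroup

variable {H G : Type*} [Group H] [Group G]

lemma conjSubgroup_one (E : Subgroup G) : conjSubgroup 1 E = E := by
  ext x
  simp [conjSubgroup]

lemma conjSubgroup_conjSubgroup (g g' : G) (E : Subgroup G) :
    conjSubgroup g (conjSubgroup g' E) = conjSubgroup (g * g') E := by
  simp only [conjSubgroup, Subgroup.map_map]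
  congr 1
  ext x
  simp [mul_assoc]

lemma conjSubgroup_mono (g : G) {E E' : Subgroup G} (h : E ≤ E') :
    conjSubgroup g E ≤ conjSubgroup g E' :=
  Subgroup.map_mono h

lemma map_conjSubgroup (f : H →* G) (h : H) (E : Subgroup H) :
    (conjSubgroup h E).map f = conjSubgroup (f h) (E.map f) := by
  simp only [conjSubgroup, Subgroup.map_map]
  congr 1
  ext x
  simp

lemma card_conjSubgroup (g : G) (E : Subgroup G) : Nat.card (conjSubgroup g E) = Nat.card E :=
  Subgroup.card_map_of_injective (MulAut.conj g).injective

lemma Sylow.coe_smul_eq_conjSubgroup {ℓ : ℕ} (g : G) (P : Sylow ℓ G) :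
    ((g • P : Sylow ℓ G) : Subgroup G) = conjSubgroup g P :=
  rfl

lemma conjRel_equivalence (ℓ : ℕ) (G : Type*) [Group G] : Equivalence (conjRel ℓ G) where
  refl E := ⟨1, conjSubgroup_one E.1⟩
  symm := by
    rintro E E' ⟨g, hg⟩
    exact ⟨g⁻¹, by rw [← hg, conjSubgroup_conjSubgroup, inv_mul_cancel, conjSubgroup_one]⟩
  trans := by
    rintro E E' E'' ⟨g, hg⟩ ⟨g', hg'⟩
    exact ⟨g' * g, by rw [← conjSubgroup_conjSubgroup, hg, hg']⟩

end ConjSubgroup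

section ElementaryAbelian

variable {ℓ : ℕ} {H G : Type*} [Group H] [Group G] {f : H →* G} {E : Subgroup H}

lemma IsElementaryAbelian.isPGroup_s5 (hE : IsElementaryAbelian ℓ E) : IsPGroup ℓ E :=
  fun x => ⟨1, Subtype.ext (by simpa using hE.2 x x.2)⟩

lemma IsElementaryAbelian.map (hE : IsElementaryAbelian ℓ E) (f : H →* G) :
    IsElementaryAbelian ℓ (E.map f) := by
  refine ⟨?_, ?_⟩
  · rintro _ ⟨x, hx, rfl⟩ _ ⟨y, hy, rfl⟩
    rw [← map_mul, ← map_mul, hE.1 x hx y hy]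
  · rintro _ ⟨x, hx, rfl⟩
    rw [← map_pow, hE.2 x hx, map_one]

lemma IsElementaryAbelian.conjSubgroup {A : Subgroup G} (hA : IsElementaryAbelian ℓ A) (g : G) :
    IsElementaryAbelian ℓ (conjSubgroup g A) :=
  hA.map _

lemma IsElementaryAbelian.of_map (hinj : Set.InjOn f E) (h : IsElementaryAbelian ℓ (E.map f)) :
    IsElementaryAbelian ℓ E := by
  refine ⟨fun x hx y hy => ?_, fun x hx => ?_⟩
  · refine hinj (mul_mem hx hy) (mul_mem hy hx) ?_
    simpa only [map_mul] using
      h.1 _ (Subgroup.mem_map_of_mem f hx) _ (Subgroup.mem_map_of_mem f hy)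
  · refine hinj (pow_mem hx ℓ) (one_mem E) ?_
    simpa only [map_pow, map_one] using h.2 _ (Subgroup.mem_map_of_mem f hx)

end ElementaryAbelian

section CoprimeKernel

variable {ℓ : ℕ} {H G : Type*} [Group H] [Group G] {f : H →* G}

lemma injOn_of_isPGroup (hker : (Nat.card f.ker).Coprime ℓ) {E : Subgroup H}
    (hE : IsPGroup ℓ E) : Set.InjOn f E :=
  (Set.injOn_iff_map_eq_one f E).2 fun _ hx hfx =>
    Subgroup.disjoint_def.1 (hE.disjoint_of_coprime IsPGroup.card hker.symm) hx hfx

lemma card_map_of_isPGroup (hker : (Nat.card f.ker).Coprime ℓ) {E : Subgroup H}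
    (hE : IsPGroup ℓ E) : Nat.card (E.map f) = Nat.card E := by
  rw [← SetLike.coe_sort_coe, Subgroup.coe_map,
    Nat.card_image_of_injOn (injOn_of_isPGroup hker hE), SetLike.coe_sort_coe]

lemma exists_sylow_coe_eq_subgroupOf (hker : (Nat.card f.ker).Coprime ℓ) {K Z : Subgroup H}
    (hZ : IsPGroup ℓ Z) (hZK : Z ≤ K) (hK : K.map f ≤ Z.map f) :
    ∃ P : Sylow ℓ K, (P : Subgroup K) = Z.subgroupOf K := by
  obtain ⟨P, hP⟩ := (hZ.comap_subtype (K := K)).exists_le_sylow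
  refine ⟨P, le_antisymm (fun x hx => ?_) hP⟩
  have hPZ : (P : Subgroup K).map K.subtype ≤ Z := by
    refine Subgroup.le_of_map_le_of_injOn (injOn_of_isPGroup hker (P.2.map _)) ?_
      ((Subgroup.map_mono (Subgroup.map_subtype_le _)).trans hK)
    rw [← Subgroup.subgroupOf_map_subtype_of_le hZK]
    exact Subgroup.map_mono hP
  exact Subgroup.mem_subgroupOf.2 (hPZ ⟨x, hx, rfl⟩)

end CoprimeKernel

section Sylow

variable {ℓ : ℕ} [Fact ℓ.Prime] {H G : Type*} [Group H] [Group G] [Finite H] {f : H →* G}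

lemma Sylow.not_dvd_index_map (hindex : ¬ ℓ ∣ f.range.index) (Q : Sylow ℓ H) :
    ¬ ℓ ∣ (Q.map f).index := by
  rw [Subgroup.index_map]
  exact (Fact.out : ℓ.Prime).not_dvd_mul
    (fun h => Q.not_dvd_index (h.trans (Subgroup.index_dvd_of_le le_sup_left))) hindex

lemma exists_conjSubgroup_le_map_sylow [Finite G] (hindex : ¬ ℓ ∣ f.range.index)
    {A : Subgroup G} (hA : IsPGroup ℓ A) :
    ∃ (Q : Sylow ℓ H) (g : G), conjSubgroup g A ≤ Q.map f := by
  obtain ⟨Q⟩ := (inferInstance : Nonempty (Sylow ℓ H))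
  obtain ⟨T, hAT⟩ := hA.exists_le_sylow
  obtain ⟨g, hg⟩ :=
    MulAction.exists_smul_eq G T ((Q.2.map f).toSylow (Q.not_dvd_index_map hindex))
  refine ⟨Q, g, ?_⟩
  calc conjSubgroup g A ≤ conjSubgroup g T := conjSubgroup_mono g hAT
    _ = Q.map f := by rw [← Sylow.coe_smul_eq_conjSubgroup, hg]; rfl

lemma exists_isPGroup_map_eq_conjSubgroup [Finite G] (hindex : ¬ ℓ ∣ f.range.index)
    {A : Subgroup G} (hA : IsPGroup ℓ A) :
    ∃ E : Subgroup H, IsPGroup ℓ E ∧ ∃ g : G, conjSubgroup g A = E.map f := by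
  obtain ⟨Q, g, hg⟩ := exists_conjSubgroup_le_map_sylow hindex hA
  exact ⟨Q ⊓ (conjSubgroup g A).comap f, Q.2.to_inf_left, g,
    by rw [Subgroup.map_inf_comap, inf_eq_right.2 hg]⟩

theorem exists_isElementaryAbelian_map_eq_conjSubgroup [Finite G]
    (hker : (Nat.card f.ker).Coprime ℓ) (hindex : ¬ ℓ ∣ f.range.index) {A : Subgroup G}
    (hA : IsElementaryAbelian ℓ A) :
    ∃ E : Subgroup H, IsElementaryAbelian ℓ E ∧ Nat.card E = Nat.card A ∧
      ∃ g : G, conjSubgroup g A = E.map f := by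
  obtain ⟨E, hE, g, hg⟩ := exists_isPGroup_map_eq_conjSubgroup hindex hA.isPGroup_s5
  refine ⟨E, (hg ▸ hA.conjSubgroup g).of_map (injOn_of_isPGroup hker hE), ?_, g, hg⟩
  rw [← card_map_of_isPGroup hker hE, ← hg, card_conjSubgroup]

theorem exists_conjSubgroup_eq_of_map_eq (hker : (Nat.card f.ker).Coprime ℓ)
    {X Y : Subgroup H} (hX : IsPGroup ℓ X) (hY : IsPGroup ℓ Y) (h : X.map f = Y.map f) :
    ∃ k : H, conjSubgroup k X = Y := by
  set K := (Y.map f).comap f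
  have hXK : X ≤ K := Subgroup.map_le_iff_le_comap.1 h.le
  have hYK : Y ≤ K := Subgroup.map_le_iff_le_comap.1 le_rfl
  have hK : K.map f ≤ Y.map f := Subgroup.map_comap_le _ _
  obtain ⟨P, hP⟩ := exists_sylow_coe_eq_subgroupOf hker hX hXK (hK.trans h.ge)
  obtain ⟨Q, hQ⟩ := exists_sylow_coe_eq_subgroupOf hker hY hYK hK
  obtain ⟨k, hk⟩ := MulAction.exists_smul_eq K P Q
  refine ⟨k, ?_⟩
  rw [← Subgroup.subgroupOf_map_subtype_of_le hXK, ← Subgroup.subgroupOf_map_subtype_of_le hYK,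
    ← hP, ← hQ, ← hk, Sylow.coe_smul_eq_conjSubgroup, map_conjSubgroup]
  rfl

end Sylow

section ConjClasses

variable {ℓ : ℕ} {H G : Type*} [Group H] [Group G] (f : H →* G)
  (hker : (Nat.card f.ker).Coprime ℓ)

def NoncyclicElemAb.map (E : NoncyclicElemAb ℓ H) : NoncyclicElemAb ℓ G :=
  ⟨E.1.map f, E.2.1.map f, by rw [card_map_of_isPGroup hker E.2.1.isPGroup_s5]; exact E.2.2⟩

lemma NoncyclicElemAb.map_conjRel {E E' : NoncyclicElemAb ℓ H} (h : conjRel ℓ H E E') :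
    conjRel ℓ G (E.map f hker) (E'.map f hker) := by
  obtain ⟨k, hk⟩ := h
  exact ⟨f k, by rw [NoncyclicElemAb.map, NoncyclicElemAb.map, ← map_conjSubgroup, hk]⟩

def conjClassesMap : Quot (conjRel ℓ H) → Quot (conjRel ℓ G) :=
  Quot.map (NoncyclicElemAb.map f hker) fun _ _ => NoncyclicElemAb.map_conjRel f hker

variable [Fact ℓ.Prime] [Finite H]

lemma conjClassesMap_surjective [Finite G] (hindex : ¬ ℓ ∣ f.range.index) :
    Function.Surjective (conjClassesMap f hker) := by
  rintro ⟨A⟩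
  obtain ⟨E, hE, hcard, g, hg⟩ :=
    exists_isElementaryAbelian_map_eq_conjSubgroup hker hindex A.2.1
  exact ⟨Quot.mk _ ⟨E, hE, hcard ▸ A.2.2⟩, (Quot.sound ⟨g, hg⟩).symm⟩

lemma conjClassesMap_injective (hf : Function.Surjective f) :
    Function.Injective (conjClassesMap f hker) := by
  rintro ⟨E⟩ ⟨E'⟩ h
  obtain ⟨g, hg⟩ := (conjRel_equivalence ℓ G).eqvGen_iff.1 (Quot.eq.1 h)
  obtain ⟨k, rfl⟩ := hf g
  have hmap : (conjSubgroup k E.1).map f = E'.1.map f := (map_conjSubgroup f k E.1).trans hg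
  obtain ⟨k', hk'⟩ := exists_conjSubgroup_eq_of_map_eq hker (E.2.1.conjSubgroup k).isPGroup_s5
    E'.2.1.isPGroup_s5 hmap
  exact Quot.sound ⟨k' * k, by rw [← conjSubgroup_conjSubgroup, hk']⟩

end ConjClasses

theorem conjClasses_noncyclic_elemAb_of_hom_general
    (ℓ : ℕ) (hℓ : ℓ.Prime) {H G : Type*} [Group H] [Group G] [Finite H] [Finite G]
    (f : H →* G)
    (hkerord : (Nat.card f.ker).Coprime ℓ)
    (hindex : f.range.index.Coprime ℓ) :
    (∀ A : Subgroup G, IsElementaryAbelian ℓ A → ℓ ^ 2 ≤ Nat.card A →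
      ∃ E : Subgroup H, IsElementaryAbelian ℓ E ∧ ℓ ^ 2 ≤ Nat.card E ∧
        ∃ g : G, conjSubgroup g A = E.map f) ∧
    (Function.Surjective f →
      ∃ e : Quot (conjRel ℓ H) ≃ Quot (conjRel ℓ G),
        ∀ (E : NoncyclicElemAb ℓ H) (A : NoncyclicElemAb ℓ G),
          A.1 = E.1.map f →
          e (Quot.mk (conjRel ℓ H) E) = Quot.mk (conjRel ℓ G) A) := by
  have : Fact ℓ.Prime := ⟨hℓ⟩
  have hindex' : ¬ ℓ ∣ f.range.index := (Nat.Prime.coprime_iff_not_dvd hℓ).1 hindex.symm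
  refine ⟨fun A hA hAcard => ?_, fun hf => ?_⟩
  · obtain ⟨E, hE, hcard, g, hg⟩ :=
      exists_isElementaryAbelian_map_eq_conjSubgroup hkerord hindex' hA
    exact ⟨E, hE, hcard ▸ hAcard, g, hg⟩
  · refine ⟨Equiv.ofBijective (conjClassesMap f hkerord)
      ⟨conjClassesMap_injective f hkerord hf, conjClassesMap_surjective f hkerord hindex'⟩,
      fun E A hEA => ?_⟩
    exact congrArg (Quot.mk _) (Subtype.ext hEA.symm)

/-- a central-kernel homomorphism with kernel of order prime to `ℓ` and
normal range of index prime to `ℓ` induces a surjection, and a bijection when it is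
surjective, on conjugacy classes of noncyclic elementary abelian `ℓ`-subgroups. -/
theorem conjClasses_noncyclic_elemAb_of_hom
    (ℓ : ℕ) (hℓ : ℓ.Prime) {H G : Type*} [Group H] [Group G] [Finite H] [Finite G]
    (f : H →* G)
    (hker : f.ker ≤ Subgroup.center H)
    (hkerord : (Nat.card f.ker).Coprime ℓ)
    (hrange : f.range.Normal)
    (hindex : f.range.index.Coprime ℓ) :
    (∀ A : Subgroup G, IsElementaryAbelian ℓ A → ℓ ^ 2 ≤ Nat.card A →
      ∃ E : Subgroup H, IsElementaryAbelian ℓ E ∧ ℓ ^ 2 ≤ Nat.card E ∧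
        ∃ g : G, conjSubgroup g A = E.map f) ∧
    (Function.Surjective f →
      ∃ e : Quot (conjRel ℓ H) ≃ Quot (conjRel ℓ G),
        ∀ (E : NoncyclicElemAb ℓ H) (A : NoncyclicElemAb ℓ G),
          A.1 = E.1.map f →
          e (Quot.mk (conjRel ℓ H) E) = Quot.mk (conjRel ℓ G) A) :=
  conjClasses_noncyclic_elemAb_of_hom_general ℓ hℓ f hkerord hindex
end

section
/- Let F be a finite field, ℓ a prime dividing |F| − 1, and n ≥ 1. Then every elementary abelian ℓ-subgroup E of the general linear group GL_n(F) is conjugate in GL_n(F) to a subgroup of the subgroup of diagonal matrices; that is, there exists g ∈ GL_n(F) such that every element of g E g⁻¹ is a diagonal matrix. -/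
open Polynomial Module

namespace Module.End

variable {K V : Type*} [Field K] [AddCommGroup V] [Module K V]

theorem ker_aeval_prod_X_sub_C_le_iSup_eigenspace (f : End K V) (s : Finset K) :
    LinearMap.ker (aeval f (∏ μ ∈ s, (X - C μ))) ≤ ⨆ μ ∈ s, f.eigenspace μ := by
  classical
  induction s using Finset.induction_on with
  | empty => simp [one_eq_id]
  | @insert a t ha ih =>
    have hcop : IsCoprime (X - C a : K[X]) (∏ μ ∈ t, (X - C μ)) :=
      IsCoprime.prod_right fun μ hμ => isCoprime_X_sub_C_of_isUnit_sub
        (sub_ne_zero_of_ne (ne_of_mem_of_not_mem hμ ha).symm).isUnit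
    have hker : LinearMap.ker (aeval f (X - C a)) = f.eigenspace a := by
      rw [eigenspace_def, map_sub, aeval_X, aeval_C, algebraMap_end_eq_smul_id, one_eq_id]
    rw [Finset.prod_insert ha, ← sup_ker_aeval_eq_ker_aeval_mul_of_coprime f hcop, hker,
      Finset.iSup_insert]
    exact sup_le_sup_left ih _

theorem iSup_eigenspace_eq_top_of_pow_eq_one {ℓ : ℕ} [NeZero ℓ] {ζ : K}
    (hζ : IsPrimitiveRoot ζ ℓ) {f : End K V} (hf : f ^ ℓ = 1) :
    ⨆ μ, f.eigenspace μ = ⊤ := by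
  have hann : aeval f (∏ μ ∈ nthRootsFinset ℓ (1 : K), (X - C μ)) = 0 := by
    simp [← X_pow_sub_one_eq_prod (NeZero.pos ℓ) hζ, hf]
  have hker := ker_aeval_prod_X_sub_C_le_iSup_eigenspace f (nthRootsFinset ℓ (1 : K))
  rw [hann, LinearMap.ker_zero] at hker
  exact top_le_iff.mp (hker.trans (iSup₂_le fun μ _ => le_iSup _ μ))

theorem isSemisimple_of_pow_eq_one {ℓ : ℕ} (hℓ : (ℓ : K) ≠ 0) {f : End K V}
    (hf : f ^ ℓ = 1) : f.IsSemisimple := by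
  refine isSemisimple_of_squarefree_aeval_eq_zero ?_ (p := X ^ ℓ - C 1) (by simp [hf])
  exact (separable_X_pow_sub_C 1 hℓ one_ne_zero).squarefree

theorem exists_basis_forall_mem_eigenspace_of_commute [FiniteDimensional K V] {ι : Type*}
    (f : ι → End K V) (hcomm : Pairwise fun i j => Commute (f i) (f j))
    (hss : ∀ i, (f i).IsFinitelySemisimple) (hsup : ∀ i, ⨆ μ, (f i).eigenspace μ = ⊤) :
    ∃ b : Basis (Fin (finrank K V)) K V, ∀ i k, ∃ μ, b k ∈ (f i).eigenspace μ := by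
  classical
  have hmaxGen (i : ι) (μ : K) : (f i).maxGenEigenspace μ = (f i).eigenspace μ :=
    (hss i).maxGenEigenspace_eq_eigenspace μ
  have hcomm' (i j : ι) : Commute (f i) (f j) :=
    (eq_or_ne i j).elim (fun h => h ▸ Commute.refl _) (@hcomm i j)
  have htop : ⨆ χ : ι → K, ⨅ i, (f i).eigenspace (χ i) = ⊤ := by
    simpa only [hmaxGen] using
      iSup_iInf_maxGenEigenspace_eq_top_of_iSup_maxGenEigenspace_eq_top_of_commute f hcomm
        fun i => (hss i).iSup_maxGenEigenspace_eq_top_iff.mpr (hsup i)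
  have hindep : iSupIndep fun χ : ι → K => ⨅ i, (f i).eigenspace (χ i) := by
    simpa only [hmaxGen] using independent_iInf_maxGenEigenspace_of_forall_mapsTo f
      fun i j μ => mapsTo_maxGenEigenspace_of_comm (hcomm' j i) μ
  have hint : DirectSum.IsInternal fun χ : ι → K => ⨅ i, (f i).eigenspace (χ i) :=
    (DirectSum.isInternal_submodule_iff_iSupIndep_and_iSup_eq_top _).mpr ⟨hindep, htop⟩
  let b := hint.collectedBasis fun χ => Module.Free.chooseBasis K _
  let e := b.indexEquiv (finBasis K V)
  refine ⟨b.reindex e, fun i k => ⟨(e.symm k).1 i, ?_⟩⟩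
  rw [Basis.reindex_apply]
  exact (Submodule.mem_iInf _).mp (hint.collectedBasis_mem _ _) i

theorem isDiag_toMatrix_of_forall_mem_eigenspace {κ : Type*} [Fintype κ] [DecidableEq κ]
    (b : Basis κ K V) {f : End K V} (hb : ∀ k, ∃ μ, b k ∈ f.eigenspace μ) :
    (LinearMap.toMatrix b b f).IsDiag := by
  intro i j hij
  obtain ⟨μ, hμ⟩ := hb j
  rw [LinearMap.toMatrix_apply, mem_eigenspace_iff.mp hμ, map_smul, Basis.repr_self,
    Finsupp.smul_apply, Finsupp.single_eq_of_ne hij, smul_zero]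

end Module.End

theorem Matrix.exists_GL_isDiag_conj_of_commute_of_pow_eq_one {K n ι : Type*} [Field K]
    [Fintype n] [DecidableEq n] {ℓ : ℕ} [NeZero ℓ] {ζ : K} (hζ : IsPrimitiveRoot ζ ℓ)
    (A : ι → Matrix n n K) (hcomm : Pairwise fun i j => Commute (A i) (A j))
    (hpow : ∀ i, A i ^ ℓ = 1) :
    ∃ P : GL n K, ∀ i,
      ((P : Matrix n n K) * A i * ((P⁻¹ : GL n K) : Matrix n n K)).IsDiag := by
  have := hζ.neZero'
  have hpow' (i : ι) : toLinAlgEquiv' (A i) ^ ℓ = 1 := by rw [← map_pow, hpow, map_one]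
  obtain ⟨b, hb⟩ := End.exists_basis_forall_mem_eigenspace_of_commute
    (fun i => toLinAlgEquiv' (A i)) (fun i j hij => (hcomm hij).map _)
    (fun i => (End.isSemisimple_of_pow_eq_one (NeZero.ne _) (hpow' i)).isFinitelySemisimple)
    (fun i => End.iSup_eigenspace_eq_top_of_pow_eq_one hζ (hpow' i))
  let std := Pi.basisFun K n
  let b' := b.reindex (b.indexEquiv std)
  let _ := b'.invertibleToMatrix std
  refine ⟨unitOfInvertible (b'.toMatrix std), fun i => ?_⟩
  have hA : LinearMap.toMatrix std std (toLin' (A i)) = A i := by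
    rw [LinearMap.toMatrix_eq_toMatrix', LinearMap.toMatrix'_toLin']
  have hconj : b'.toMatrix std * A i * std.toMatrix b' =
      LinearMap.toMatrix b' b' (toLin' (A i)) := by
    simpa only [hA] using
      basis_toMatrix_mul_linearMap_toMatrix_mul_basis_toMatrix b' std b' std (toLin' (A i))
  change (b'.toMatrix std * A i * std.toMatrix b').IsDiag
  rw [hconj]
  exact End.isDiag_toMatrix_of_forall_mem_eigenspace b' fun k => by
    rw [Basis.reindex_apply]; exact hb i _

theorem FiniteField.exists_isPrimitiveRoot_of_dvd_card_sub_one {F : Type*} [Field F] [Finite F]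
    {ℓ : ℕ} (h : ℓ ∣ Nat.card F - 1) : ∃ ζ : F, IsPrimitiveRoot ζ ℓ := by
  obtain ⟨g, hg⟩ := IsCyclic.exists_ofOrder_eq_natCard (α := Fˣ)
  rw [← Nat.card_units, ← hg] at h
  refine ⟨↑(g ^ (orderOf g / ℓ)), IsPrimitiveRoot.coe_units_iff.mpr ?_⟩
  have := IsPrimitiveRoot.orderOf (g ^ (orderOf g / ℓ))
  rwa [orderOf_pow_orderOf_div (hg ▸ Nat.card_pos.ne') h] at this

theorem elemAb_subgroup_GL_conjugate_to_diagonal_general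
    (F : Type*) [Field F] [Finite F] (ℓ : ℕ)
    (hdvd : ℓ ∣ Nat.card F - 1) (n : ℕ)
    (E : Subgroup (GL (Fin n) F)) (hE : IsElementaryAbelian ℓ E) :
    ∃ g : GL (Fin n) F, ∀ x ∈ conjSubgroup g E,
      Matrix.IsDiag (x : Matrix (Fin n) (Fin n) F) := by
  have hcard : 1 < Nat.card F := Finite.one_lt_card
  have : NeZero ℓ := NeZero.of_pos (Nat.pos_of_dvd_of_pos hdvd (by omega))
  obtain ⟨ζ, hζ⟩ := FiniteField.exists_isPrimitiveRoot_of_dvd_card_sub_one hdvd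
  obtain ⟨g, hg⟩ := Matrix.exists_GL_isDiag_conj_of_commute_of_pow_eq_one hζ
    (fun x : E => ((x : GL (Fin n) F) : Matrix (Fin n) (Fin n) F))
    (fun x y _ => congrArg Units.val (hE.1 x x.2 y y.2))
    (fun x => by rw [← Units.val_pow_eq_pow_val, hE.2 x x.2, Units.val_one])
  refine ⟨g, ?_⟩
  rintro _ ⟨x, hx, rfl⟩
  exact hg ⟨x, hx⟩

/-- if `ℓ` is a prime dividing `|F| − 1`, every elementary abelian
`ℓ`-subgroup of `GL_n(F)` is conjugate to a subgroup of the diagonal matrices. -/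
theorem elemAb_subgroup_GL_conjugate_to_diagonal
    (F : Type*) [Field F] [Finite F] (ℓ : ℕ) (hℓ : ℓ.Prime)
    (hdvd : ℓ ∣ Nat.card F - 1) (n : ℕ) (hn : 1 ≤ n)
    (E : Subgroup (GL (Fin n) F)) (hE : IsElementaryAbelian ℓ E) :
    ∃ g : GL (Fin n) F, ∀ x ∈ conjSubgroup g E,
      Matrix.IsDiag (x : Matrix (Fin n) (Fin n) F) :=
  elemAb_subgroup_GL_conjugate_to_diagonal_general F ℓ hdvd n E hE
end

section
/- Let p be an odd prime and let U be the group of upper unitriangular 3 × 3 matrices over 𝔽_p = ZMod p (matrices with 1's on the diagonal and 0's below it). Then every element of U satisfies u^p = 1, and U has exactly p + 1 maximal elementary abelian subgroups; each of these has order p² and each is a normal subgroup of U. -/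
section
variable {p : ℕ}
def hmat (p : ℕ) (a b c : ZMod p) : Matrix (Fin 3) (Fin 3) (ZMod p) := !![1,a,b;0,1,c;0,0,1]

lemma hmat_mul (a b c a' b' c' : ZMod p) :
    hmat p a b c * hmat p a' b' c' = hmat p (a+a') (b+b'+a*c') (c+c') := by
  ext i j
  fin_cases i <;> fin_cases j <;>
    simp [hmat, Matrix.mul_apply, Fin.sum_univ_three, Matrix.vecHead, Matrix.vecTail] <;> ring

lemma hmat_zero : hmat p 0 0 0 = 1 := by
  ext i j; fin_cases i <;> fin_cases j <;> simp [hmat, Matrix.one_apply, Matrix.vecHead, Matrix.vecTail]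

def hGL (p : ℕ) (a b c : ZMod p) : GL (Fin 3) (ZMod p) :=
  ⟨hmat p a b c, hmat p (-a) (a*c-b) (-c), by rw [hmat_mul]; ring_nf; simpa using hmat_zero,
    by rw [hmat_mul]; ring_nf; simpa using hmat_zero⟩

variable {U : Subgroup (GL (Fin 3) (ZMod p))}
  (hU : ∀ A : GL (Fin 3) (ZMod p), A ∈ U ↔
      (∀ i j : Fin 3, j < i → (A : Matrix (Fin 3) (Fin 3) (ZMod p)) i j = 0) ∧
      ∀ i : Fin 3, (A : Matrix (Fin 3) (Fin 3) (ZMod p)) i i = 1)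

def ca (u : U) : ZMod p := ((u : GL (Fin 3) (ZMod p)) : Matrix (Fin 3) (Fin 3) (ZMod p)) 0 1
def cb (u : U) : ZMod p := ((u : GL (Fin 3) (ZMod p)) : Matrix (Fin 3) (Fin 3) (ZMod p)) 0 2
def cc (u : U) : ZMod p := ((u : GL (Fin 3) (ZMod p)) : Matrix (Fin 3) (Fin 3) (ZMod p)) 1 2

include hU

lemma entry_lo (u : U) (i j : Fin 3) (h : j < i) :
    ((u : GL (Fin 3) (ZMod p)) : Matrix (Fin 3) (Fin 3) (ZMod p)) i j = 0 :=
  ((hU _).1 u.2).1 i j h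

lemma entry_diag (u : U) (i : Fin 3) :
    ((u : GL (Fin 3) (ZMod p)) : Matrix (Fin 3) (Fin 3) (ZMod p)) i i = 1 :=
  ((hU _).1 u.2).2 i

lemma matrix_eq (u : U) :
    ((u : GL (Fin 3) (ZMod p)) : Matrix (Fin 3) (Fin 3) (ZMod p)) = hmat p (ca u) (cb u) (cc u) := by
  ext i j
  fin_cases i <;> fin_cases j <;>
    simp [hmat, Matrix.vecHead, Matrix.vecTail, ca, cb, cc,
      entry_lo hU u, entry_diag hU u]

lemma ext_u (u v : U) (ha : ca u = ca v) (hb : cb u = cb v) (hc : cc u = cc v) : u = v := by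
  apply Subtype.ext; apply Units.ext
  rw [matrix_eq hU u, matrix_eq hU v, ha, hb, hc]

lemma coe_mul_matrix (u v : U) :
    (((u * v : U) : GL (Fin 3) (ZMod p)) : Matrix (Fin 3) (Fin 3) (ZMod p))
      = hmat p (ca u + ca v) (cb u + cb v + ca u * cc v) (cc u + cc v) := by
  push_cast
  rw [matrix_eq hU u, matrix_eq hU v, hmat_mul]

lemma ca_mul (u v : U) : ca (u * v) = ca u + ca v := by
  show _ = _
  rw [show (ca (u*v) : ZMod p) = _ from congrFun (congrFun (coe_mul_matrix hU u v) _) _]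
  simp [hmat, Matrix.vecHead, Matrix.vecTail]
lemma cb_mul (u v : U) : cb (u * v) = cb u + cb v + ca u * cc v := by
  show _ = _
  rw [show (cb (u*v) : ZMod p) = _ from congrFun (congrFun (coe_mul_matrix hU u v) _) _]
  simp [hmat, Matrix.vecHead, Matrix.vecTail]
lemma cc_mul (u v : U) : cc (u * v) = cc u + cc v := by
  show _ = _
  rw [show (cc (u*v) : ZMod p) = _ from congrFun (congrFun (coe_mul_matrix hU u v) _) _]
  simp [hmat, Matrix.vecHead, Matrix.vecTail]

omit hU in
lemma ca_one : ca (1 : U) = 0 := by simp [ca]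
omit hU in
lemma cb_one : cb (1 : U) = 0 := by simp [cb]
omit hU in
lemma cc_one : cc (1 : U) = 0 := by simp [cc]

lemma ca_inv (u : U) : ca u⁻¹ = - ca u := by
  have := ca_mul hU u u⁻¹
  rw [mul_inv_cancel, ca_one] at this; linear_combination -this
lemma cc_inv (u : U) : cc u⁻¹ = - cc u := by
  have := cc_mul hU u u⁻¹
  rw [mul_inv_cancel, cc_one] at this; linear_combination -this

def MU (a b c : ZMod p) : U :=
  ⟨hGL p a b c, by
    rw [hU]
    constructor
    · intro i j h
      fin_cases i <;> fin_cases j <;> simp at h ⊢ <;>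
        simp [hGL, hmat, Matrix.vecHead, Matrix.vecTail]
    · intro i
      fin_cases i <;> simp [hGL, hmat, Matrix.vecHead, Matrix.vecTail]⟩

lemma ca_MU (a b c : ZMod p) : ca (MU hU a b c) = a := by
  simp [ca, MU, hGL, hmat, Matrix.vecHead, Matrix.vecTail]
lemma cb_MU (a b c : ZMod p) : cb (MU hU a b c) = b := by
  simp [cb, MU, hGL, hmat, Matrix.vecHead, Matrix.vecTail]
lemma cc_MU (a b c : ZMod p) : cc (MU hU a b c) = c := by
  simp [cc, MU, hGL, hmat, Matrix.vecHead, Matrix.vecTail]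

lemma commute_iff (u v : U) : u * v = v * u ↔ ca u * cc v = ca v * cc u := by
  constructor
  · intro h
    have := congrArg cb h
    rw [cb_mul hU, cb_mul hU] at this
    linear_combination this
  · intro h
    refine ext_u hU _ _ ?_ ?_ ?_
    · rw [ca_mul hU, ca_mul hU]; ring
    · rw [cb_mul hU, cb_mul hU]; linear_combination h
    · rw [cc_mul hU, cc_mul hU]; ring

lemma pow_coords (u : U) (n : ℕ) :
    ca (u ^ n) = n * ca u ∧ cc (u ^ n) = n * cc u ∧
      cb (u ^ n) = n * cb u + (n.choose 2) * (ca u * cc u) := by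
  induction n with
  | zero => simp [pow_zero, ca_one, cb_one, cc_one]
  | succ n ih =>
    obtain ⟨h1, h2, h3⟩ := ih
    rw [pow_succ]
    refine ⟨?_, ?_, ?_⟩
    · rw [ca_mul hU, h1]; push_cast; ring
    · rw [cc_mul hU, h2]; push_cast; ring
    · rw [cb_mul hU, h1, h3]
      have hc : (n+1).choose 2 = n.choose 2 + n := by
        rw [Nat.choose_succ_succ]
        simp [Nat.choose_one_right, Nat.add_comm]
      rw [hc]; push_cast; ring

def Et (t : ZMod p) : Subgroup U where
  carrier := {u | cc u = t * ca u}
  one_mem' := by simp [Set.mem_setOf_eq, ca_one, cc_one]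
  mul_mem' := by
    intro u v hu hv
    simp only [Set.mem_setOf_eq] at *
    rw [ca_mul hU, cc_mul hU, hu, hv]; ring
  inv_mem' := by
    intro u hu
    simp only [Set.mem_setOf_eq] at *
    rw [ca_inv hU, cc_inv hU, hu]; ring

def Einf : Subgroup U where
  carrier := {u | ca u = 0}
  one_mem' := by simp [Set.mem_setOf_eq, ca_one]
  mul_mem' := by
    intro u v hu hv
    simp only [Set.mem_setOf_eq] at *
    rw [ca_mul hU, hu, hv]; ring
  inv_mem' := by
    intro u hu
    simp only [Set.mem_setOf_eq] at *
    rw [ca_inv hU, hu]; ring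

lemma mem_Et {t : ZMod p} {u : U} : u ∈ Et hU t ↔ cc u = t * ca u := Iff.rfl
lemma mem_Einf {u : U} : u ∈ Einf hU ↔ ca u = 0 := Iff.rfl

lemma pow_p_eq_one (hp : p.Prime) (hodd : Odd p) (u : U) : u ^ p = 1 := by
  obtain ⟨h1, h2, h3⟩ := pow_coords hU u p
  have hp0 : (p : ZMod p) = 0 := ZMod.natCast_self p
  have hch : ((p.choose 2 : ℕ) : ZMod p) = 0 := by
    rw [ZMod.natCast_eq_zero_iff]
    exact hp.dvd_choose_self (by norm_num) (by
      rcases hodd with ⟨k, hk⟩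
      have := hp.two_le
      omega)
  refine ext_u hU _ _ ?_ ?_ ?_
  · rw [h1, ca_one, hp0]; ring
  · rw [h3, cb_one, hp0, hch]; ring
  · rw [h2, cc_one, hp0]; ring

lemma Et_elem (hp : p.Prime) (hodd : Odd p) (t : ZMod p) :
    IsElementaryAbelian p (Et hU t) := by
  constructor
  · intro u hu v hv
    rw [commute_iff hU, (mem_Et hU).1 hu, (mem_Et hU).1 hv]; ring
  · intro u _; exact pow_p_eq_one hU hp hodd u

lemma Einf_elem (hp : p.Prime) (hodd : Odd p) :
    IsElementaryAbelian p (Einf hU) := by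
  constructor
  · intro u hu v hv
    rw [commute_iff hU, (mem_Einf hU).1 hu, (mem_Einf hU).1 hv]; ring
  · intro u _; exact pow_p_eq_one hU hp hodd u

lemma MU_mem_Et (t : ZMod p) : MU hU 1 0 t ∈ Et hU t := by
  rw [mem_Et hU, ca_MU, cc_MU]; ring

lemma MU_mem_Einf : MU hU 0 0 1 ∈ Einf hU := by
  rw [mem_Einf hU, ca_MU]

lemma Et_max (hp : p.Prime) (hodd : Odd p) (t : ZMod p) :
    IsMaximalElementaryAbelian p (Et hU t) := by
  refine ⟨Et_elem hU hp hodd t, fun E' hE' hle => ?_⟩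
  refine le_antisymm (fun u hu => ?_) hle
  have hcom := hE'.1 u hu (MU hU 1 0 t) (hle (MU_mem_Et hU t))
  rw [commute_iff hU, ca_MU, cc_MU] at hcom
  rw [mem_Et hU]
  linear_combination -hcom

lemma Einf_max (hp : p.Prime) (hodd : Odd p) :
    IsMaximalElementaryAbelian p (Einf hU) := by
  refine ⟨Einf_elem hU hp hodd, fun E' hE' hle => ?_⟩
  refine le_antisymm (fun u hu => ?_) hle
  have hcom := hE'.1 u hu (MU hU 0 0 1) (hle (MU_mem_Einf hU))
  rw [commute_iff hU, ca_MU, cc_MU] at hcom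
  rw [mem_Einf hU]
  linear_combination hcom

lemma classify (hp : p.Prime) (hodd : Odd p) (E : Subgroup U)
    (hE : IsMaximalElementaryAbelian p E) :
    (∃ t, E = Et hU t) ∨ E = Einf hU := by
  haveI := Fact.mk hp
  by_cases h : ∃ u ∈ E, ca u ≠ 0
  · obtain ⟨u, huE, hau⟩ := h
    left
    refine ⟨cc u / ca u, ?_⟩
    have hle : E ≤ Et hU (cc u / ca u) := by
      intro v hv
      have hcom := hE.1.1 v hv u huE
      rw [commute_iff hU] at hcom
      rw [mem_Et hU]
      field_simp
      linear_combination -hcom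
    exact (hE.2 _ (Et_elem hU hp hodd _) hle).symm
  · right
    push_neg at h
    exact (hE.2 _ (Einf_elem hU hp hodd) (fun v hv => (mem_Einf hU).2 (h v hv))).symm

lemma Et_card (hp : p.Prime) (t : ZMod p) : Nat.card (Et hU t) = p ^ 2 := by
  haveI := Fact.mk hp
  haveI : NeZero p := ⟨hp.ne_zero⟩
  have e : (Et hU t) ≃ ZMod p × ZMod p := by
    refine ⟨fun u => (ca u.1, cb u.1), fun x => ⟨MU hU x.1 x.2 (t * x.1), by
      rw [mem_Et hU, ca_MU, cc_MU]⟩, ?_, ?_⟩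
    · intro u
      apply Subtype.ext
      refine ext_u hU _ _ ?_ ?_ ?_
      · rw [ca_MU]
      · rw [cb_MU]
      · rw [cc_MU]; exact ((mem_Et hU).1 u.2).symm
    · intro x
      simp [ca_MU hU, cb_MU hU]
  rw [Nat.card_congr e, Nat.card_prod, Nat.card_zmod]
  ring

lemma Einf_card (hp : p.Prime) : Nat.card (Einf hU) = p ^ 2 := by
  haveI := Fact.mk hp
  haveI : NeZero p := ⟨hp.ne_zero⟩
  have e : (Einf hU) ≃ ZMod p × ZMod p := by
    refine ⟨fun u => (cb u.1, cc u.1), fun x => ⟨MU hU 0 x.1 x.2, by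
      rw [mem_Einf hU, ca_MU]⟩, ?_, ?_⟩
    · intro u
      apply Subtype.ext
      refine ext_u hU _ _ ?_ ?_ ?_
      · rw [ca_MU]; exact ((mem_Einf hU).1 u.2).symm
      · rw [cb_MU]
      · rw [cc_MU]
    · intro x
      simp [cb_MU hU, cc_MU hU]
  rw [Nat.card_congr e, Nat.card_prod, Nat.card_zmod]
  ring

lemma ca_conj (g u : U) : ca (g * u * g⁻¹) = ca u := by
  rw [ca_mul hU, ca_mul hU, ca_inv hU]; ring
lemma cc_conj (g u : U) : cc (g * u * g⁻¹) = cc u := by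
  rw [cc_mul hU, cc_mul hU, cc_inv hU]; ring

lemma Et_normal (t : ZMod p) : (Et hU t).Normal := by
  constructor
  intro u hu g
  rw [mem_Et hU, ca_conj hU, cc_conj hU]
  exact (mem_Et hU).1 hu

lemma Einf_normal : (Einf hU).Normal := by
  constructor
  intro u hu g
  rw [mem_Einf hU, ca_conj hU]
  exact (mem_Einf hU).1 hu

lemma Et_inj (hp : p.Prime) {t s : ZMod p} (h : Et hU t = Et hU s) : t = s := by
  have := MU_mem_Et hU t
  rw [h, mem_Et hU, ca_MU, cc_MU] at this
  simpa using this

lemma Et_ne_Einf (hp : p.Prime) (t : ZMod p) : Et hU t ≠ Einf hU := by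
  haveI := Fact.mk hp
  intro h
  have := MU_mem_Et hU t
  rw [h, mem_Einf hU, ca_MU] at this
  exact one_ne_zero this

end

/-- for an odd prime `p`, the Heisenberg group `U` of upper unitriangular
`3 × 3` matrices over `𝔽_p` has exponent `p` and exactly `p + 1` maximal elementary
abelian subgroups, each of order `p²` and normal in `U`. -/
theorem heisenberg_maximal_elemAb
    (p : ℕ) (hp : p.Prime) (hodd : Odd p)
    (U : Subgroup (GL (Fin 3) (ZMod p)))
    (hU : ∀ A : GL (Fin 3) (ZMod p), A ∈ U ↔
      (∀ i j : Fin 3, j < i → (A : Matrix (Fin 3) (Fin 3) (ZMod p)) i j = 0) ∧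
      ∀ i : Fin 3, (A : Matrix (Fin 3) (Fin 3) (ZMod p)) i i = 1) :
    (∀ u : U, u ^ p = 1) ∧
    Nat.card {E : Subgroup U // IsMaximalElementaryAbelian p E} = p + 1 ∧
    ∀ E : Subgroup U, IsMaximalElementaryAbelian p E →
      Nat.card E = p ^ 2 ∧ E.Normal := by
  refine ⟨pow_p_eq_one hU hp hodd, ?_, ?_⟩
  · haveI := Fact.mk hp
    haveI : NeZero p := ⟨hp.ne_zero⟩
    have hb : Function.Bijective (fun o : Option (ZMod p) =>
        (⟨o.elim (Einf hU) (Et hU), by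
            cases o with
            | none => exact Einf_max hU hp hodd
            | some t => exact Et_max hU hp hodd t⟩ :
          {E : Subgroup ↥U // IsMaximalElementaryAbelian p E})) := by
      constructor
      · intro o1 o2 h
        have h' := congrArg Subtype.val h
        match o1, o2 with
        | none, none => rfl
        | none, some t => exact absurd h'.symm (Et_ne_Einf hU hp t)
        | some t, none => exact absurd h' (Et_ne_Einf hU hp t)
        | some t, some s => exact congrArg some (Et_inj hU hp h')
      · rintro ⟨E, hE⟩
        rcases classify hU hp hodd E hE with ⟨t, rfl⟩ | rfl
        · exact ⟨some t, rfl⟩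
        · exact ⟨none, rfl⟩
    rw [← Nat.card_eq_of_bijective _ hb]
    simp [Nat.card_eq_fintype_card]
  · intro E hE
    rcases classify hU hp hodd E hE with ⟨t, rfl⟩ | rfl
    · exact ⟨Et_card hU hp t, Et_normal hU t⟩
    · exact ⟨Einf_card hU hp, Einf_normal hU⟩
end
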